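/- If π : A₁ → A₀ is a surjective homomorphism between algebras (A₁, F₁) and (A₀, F₀) of the same purely functional language, and (A₁, F₁) is a Ramsey algebra, then (A₀, F₀) is a Ramsey algebra. -/
import Mathlib


namespace RamseyAlg

/- Orderly-term syntax trees over an operation-index type `ι`:
`leaf` is the identity (a single variable), `node g f` applies the basic
operation `g` to the results of the trees in the forest `f`. -/
mutual
  inductive OTree (ι : Type) : Type
    | leaf : OTree ι
    | node : ι → OForest ι → OTree ι
  inductive OForest (ι : Type) : Type
    | nil : OForest ι
    | cons : OTree ι → OForest ι → OForest ι
end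

def OForest.length {ι : Type} : OForest ι → ℕ
  | .nil => 0
  | .cons _ f => f.length + 1

/- Well-formedness: each node applies a `k`-ary basic operation to exactly
`k` subtrees, where `ar` gives the arities. -/
mutual
  def OTree.WF {ι : Type} (ar : ι → ℕ) : OTree ι → Prop
    | .leaf => True
    | .node g f => OForest.length f = ar g ∧ OForest.WF ar f
  def OForest.WF {ι : Type} (ar : ι → ℕ) : OForest ι → Prop
    | .nil => True
    | .cons t f => OTree.WF ar t ∧ OForest.WF ar f
end

/- Evaluation of an orderly term on an input list: the variables of the term
consume an initial segment of the list, in order, each exactly once; what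
remains of the list is returned alongside the value. -/
mutual
  def OTree.evalAux {ι A : Type} (F : ι → List A → A) :
      OTree ι → List A → Option (A × List A)
    | .leaf, [] => none
    | .leaf, a :: rest => some (a, rest)
    | .node g f, l =>
      match OForest.evalAux F f l with
      | none => none
      | some (rs, rest) => some (F g rs, rest)
  def OForest.evalAux {ι A : Type} (F : ι → List A → A) :
      OForest ι → List A → Option (List A × List A)
    | .nil, l => some ([], l)
    | .cons t f, l =>
      match OTree.evalAux F t l with
      | none => none
      | some (r, rest) =>
        match OForest.evalAux F f rest with
        | none => none
        | some (rs, rest') => some (r :: rs, rest')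
end

/- The value of the orderly term `t` on the finite sequence `l`, defined
exactly when the variables of `t` consume all of `l`. -/
def OTree.eval {ι A : Type} (F : ι → List A → A) (t : OTree ι) (l : List A) :
    Option A :=
  match OTree.evalAux F t l with
  | some (a, []) => some a
  | _ => none

/- `Reduction ar F a b` : `a` is a reduction of `b` with respect to `F`, i.e.
there are well-formed orderly terms `t j` applied to consecutive disjoint
finite subsequences of `b` (extracted by the strictly monotone `e`, in blocks
of lengths `len j`) producing the terms of `a` in order. -/
def Reduction {ι A : Type} (ar : ι → ℕ) (F : ι → List A → A)
    (a b : ℕ → A) : Prop :=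
  ∃ (t : ℕ → OTree ι) (len : ℕ → ℕ) (e : ℕ → ℕ),
    StrictMono e ∧ (∀ j, (t j).WF ar) ∧
    ∀ j, (t j).eval F ((List.range (len j)).map
        (fun i => b (e ((∑ m ∈ Finset.range j, len m) + i)))) = some (a j)

/- `FR ar F b` : the set of values of orderly terms over `F` applied to
finite subsequences of `b`. -/
def FR {ι A : Type} (ar : ι → ℕ) (F : ι → List A → A) (b : ℕ → A) : Set A :=
  { x | ∃ (t : OTree ι) (l : List ℕ), t.WF ar ∧ l.Chain' (· < ·) ∧
      t.eval F (l.map b) = some x }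

/- `(A, F)` is a Ramsey algebra: every infinite sequence has, for every
`X ⊆ A`, a reduction homogeneous for `X`. -/
def RamseyAlgebra {ι A : Type} (ar : ι → ℕ) (F : ι → List A → A) : Prop :=
  ∀ (b : ℕ → A) (X : Set A), ∃ a : ℕ → A,
    Reduction ar F a b ∧ (FR ar F a ⊆ X ∨ FR ar F a ∩ X = ∅)

end RamseyAlg



namespace RamseyAlg

theorem evalAux_length {ι A : Type} (F : ι → List A → A) :
    ∀ (f : OForest ι) (l : List A) (rs rest : List A),
      OForest.evalAux F f l = some (rs, rest) → rs.length = f.length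
  | .nil, l, rs, rest => by
    intro h; simp [OForest.evalAux] at h; simp [h.1, OForest.length]
  | .cons t f, l, rs, rest => by
    intro h
    unfold OForest.evalAux at h
    cases ht : OTree.evalAux F t l with
    | none => rw [ht] at h; simp at h
    | some p =>
      obtain ⟨r, rest2⟩ := p
      rw [ht] at h
      simp only at h
      cases hf : OForest.evalAux F f rest2 with
      | none => rw [hf] at h; simp at h
      | some q =>
        rw [hf] at h
        simp only [Option.some.injEq, Prod.mk.injEq] at h
        have := evalAux_length F f rest2 q.1 q.2 hf
        simp [← h.1, OForest.length, List.length_cons, this]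

mutual
theorem treeComm {ι A₁ A₀ : Type} (ar : ι → ℕ) (F₁ : ι → List A₁ → A₁)
    (F₀ : ι → List A₀ → A₀) (π : A₁ → A₀)
    (hhom : ∀ i (l : List A₁), l.length = ar i → π (F₁ i l) = F₀ i (l.map π)) :
    ∀ (t : OTree ι) (l : List A₁), t.WF ar →
    OTree.evalAux F₀ t (l.map π)
      = (OTree.evalAux F₁ t l).map (fun p => (π p.1, p.2.map π))
  | .leaf, [], _ => by simp [OTree.evalAux]
  | .leaf, a :: rest, _ => by simp [OTree.evalAux]
  | .node g f, l, hwf => by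
    have hf := forestComm ar F₁ F₀ π hhom f l hwf.2
    unfold OTree.evalAux
    rw [hf]
    cases h1 : OForest.evalAux F₁ f l with
    | none => simp
    | some p =>
      have hlen : p.1.length = ar g := by
        rw [evalAux_length F₁ f l p.1 p.2 (by rw [h1])]
        exact hwf.1
      simp [hhom g p.1 hlen]
theorem forestComm {ι A₁ A₀ : Type} (ar : ι → ℕ) (F₁ : ι → List A₁ → A₁)
    (F₀ : ι → List A₀ → A₀) (π : A₁ → A₀)
    (hhom : ∀ i (l : List A₁), l.length = ar i → π (F₁ i l) = F₀ i (l.map π)) :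
    ∀ (f : OForest ι) (l : List A₁), f.WF ar →
    OForest.evalAux F₀ f (l.map π)
      = (OForest.evalAux F₁ f l).map (fun p => (p.1.map π, p.2.map π))
  | .nil, l, _ => by simp [OForest.evalAux]
  | .cons t f, l, hwf => by
    have ht := treeComm ar F₁ F₀ π hhom t l hwf.1
    unfold OForest.evalAux
    rw [ht]
    cases h1 : OTree.evalAux F₁ t l with
    | none => simp
    | some p =>
      have hf := forestComm ar F₁ F₀ π hhom f p.2 hwf.2
      rw [Option.map_some]
      simp only
      rw [hf]
      cases h2 : OForest.evalAux F₁ f p.2 with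
      | none => simp
      | some q => simp
end

theorem evalComm {ι A₁ A₀ : Type} (ar : ι → ℕ) (F₁ : ι → List A₁ → A₁)
    (F₀ : ι → List A₀ → A₀) (π : A₁ → A₀)
    (hhom : ∀ i (l : List A₁), l.length = ar i → π (F₁ i l) = F₀ i (l.map π))
    (t : OTree ι) (l : List A₁) (hwf : t.WF ar) :
    OTree.eval F₀ t (l.map π) = (OTree.eval F₁ t l).map π := by
  unfold OTree.eval
  rw [treeComm ar F₁ F₀ π hhom t l hwf]
  cases h1 : OTree.evalAux F₁ t l with
  | none => simp
  | some p =>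
    rcases p with ⟨a, rest⟩
    cases rest <;> simp

end RamseyAlg

open RamseyAlg in
/-- If `π : A₁ → A₀` is a surjective homomorphism between algebras of the
same purely functional language and `(A₁, F₁)` is Ramsey, then `(A₀, F₀)` is Ramsey. -/
theorem stmt8 (ι A₁ A₀ : Type) (ar : ι → ℕ)
    (F₁ : ι → List A₁ → A₁) (F₀ : ι → List A₀ → A₀) (π : A₁ → A₀)
    (hsurj : Function.Surjective π)
    (hhom : ∀ i (l : List A₁), l.length = ar i → π (F₁ i l) = F₀ i (l.map π))
    (h : RamseyAlgebra ar F₁) : RamseyAlgebra ar F₀ := by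
  intro b X
  choose b₁ hb₁ using fun n => hsurj (b n)
  obtain ⟨a₁, ⟨t, len, e, hmono, hwf, heval⟩, hhomog⟩ := h b₁ (π ⁻¹' X)
  refine ⟨fun n => π (a₁ n), ⟨t, len, e, hmono, hwf, ?_⟩, ?_⟩
  · intro j
    have := evalComm ar F₁ F₀ π hhom (t j)
      ((List.range (len j)).map (fun i => b₁ (e ((∑ m ∈ Finset.range j, len m) + i))))
      (hwf j)
    rw [heval j] at this
    simpa [List.map_map, Function.comp_def, hb₁] using this
  · have hFR : FR ar F₀ (fun n => π (a₁ n)) = π '' FR ar F₁ a₁ := by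
      ext x
      constructor
      · rintro ⟨tt, l, htwf, hch, hev⟩
        have : (l.map fun n => π (a₁ n)) = (l.map a₁).map π := by
          simp [List.map_map, Function.comp]
        rw [this, evalComm ar F₁ F₀ π hhom tt (l.map a₁) htwf] at hev
        cases h1 : OTree.eval F₁ tt (l.map a₁) with
        | none => rw [h1] at hev; simp at hev
        | some y =>
          rw [h1] at hev
          simp only [Option.map_some, Option.some.injEq] at hev
          exact ⟨y, ⟨tt, l, htwf, hch, h1⟩, hev⟩
      · rintro ⟨y, ⟨tt, l, htwf, hch, hev⟩, rfl⟩
        refine ⟨tt, l, htwf, hch, ?_⟩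
        have : (l.map fun n => π (a₁ n)) = (l.map a₁).map π := by
          simp [List.map_map, Function.comp]
        rw [this, evalComm ar F₁ F₀ π hhom tt (l.map a₁) htwf, hev, Option.map_some]
    rw [hFR]
    rcases hhomog with hsub | hdisj
    · left
      rintro x ⟨y, hy, rfl⟩
      exact hsub hy
    · right
      ext x
      simp only [Set.mem_inter_iff, Set.mem_image, Set.mem_empty_iff_false, iff_false]
      rintro ⟨⟨y, hy, rfl⟩, hx⟩
      have : y ∈ FR ar F₁ a₁ ∩ (π ⁻¹' X) := ⟨hy, hx⟩
      rw [hdisj] at this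
      exact this
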